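/- In the graph H_k whose vertices are barcodes of 4-bars of S_k and whose edges correspond to barcodes of 5-bars, the vertex s corresponding to the full 4-bar (all 4k vertices) has a self-loop, and from any vertex v there is a directed path of at most 4 edges to s: extending any barcode of a 4-bar by a full column always yields a barcode of a 5-bar. Consequently H_k is strongly connected. -/

import Mathlib

/-- The strip S_k: vertex set the integers times {0,...,k-1}, with edges
between vertices at Euclidean distance 1. -/
def strip (k : ℕ) : SimpleGraph (ℤ × Fin k) where
  Adj p q := (p.1 - q.1).natAbs + ((p.2 : ℤ) - (q.2 : ℤ)).natAbs = 1
  symm := ⟨by intro p q h; omega⟩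
  loopless := ⟨by intro p h; omega⟩

/-- Closed neighborhood N[v] (taken in the strip S_k). -/
def closedNbhd {V : Type*} (G : SimpleGraph V) (v : V) : Set V :=
  {u | u = v ∨ G.Adj u v}

/-- P is a barcode of the l-bar of S_k occupying columns j,...,j+l-1:
P is a subset of the bar satisfying the identifying-code conditions locally
for the vertices of the middle columns j+1,...,j+l-2. -/
def IsBarcode (k : ℕ) (j l : ℤ) (P : Set (ℤ × Fin k)) : Prop :=
  (∀ p ∈ P, j ≤ p.1 ∧ p.1 < j + l) ∧
  (∀ v : ℤ × Fin k, j + 1 ≤ v.1 → v.1 < j + l - 1 →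
    (closedNbhd (strip k) v ∩ P).Nonempty) ∧
  (∀ u v : ℤ × Fin k, j + 1 ≤ u.1 → u.1 < j + l - 1 →
    j + 1 ≤ v.1 → v.1 < j + l - 1 → u ≠ v →
    closedNbhd (strip k) u ∩ P ≠ closedNbhd (strip k) v ∩ P)

/-- The edge relation of the digraph H_k on barcodes of 4-bars (normalized to
columns 0,...,3): there is an edge from P to P' when some barcode Q of a
5-bar induces P on its first 4 columns and (a shifted copy of) P' on its
last 4 columns. -/
def HkAdj (k : ℕ) (P P' : Set (ℤ × Fin k)) : Prop :=
  ∃ Q : Set (ℤ × Fin k), IsBarcode k 0 5 Q ∧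
    P = {p ∈ Q | p.1 ≤ 3} ∧
    P' = {p : ℤ × Fin k | 0 ≤ p.1 ∧ (p.1 + 1, p.2) ∈ Q}

/-- The barcode consisting of all 4k vertices of the 4-bar on columns
0,...,3. -/
def fullBar (k : ℕ) : Set (ℤ × Fin k) :=
  {p : ℤ × Fin k | 0 ≤ p.1 ∧ p.1 ≤ 3}

/-!
Translations and reflections of the strip are graph automorphisms, so they carry barcodes to
barcodes; restricting a barcode to a sub-bar, or appending a full column to it, again gives a
barcode (a vertex of the last old column is the only middle vertex adjacent to its neighbour in
the new column). So appending a full column and forgetting the first one is an edge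
`P → fullColumnStep k P` of `H_k`, and four such steps lead from any barcode to the full bar
`s`. Reflecting the bars reverses every edge of `H_k` and fixes `s`, hence `s` also reaches
every vertex.
-/

theorem image_closedNbhd {V W : Type*} {G : SimpleGraph V} {G' : SimpleGraph W} (e : G ≃g G')
    (v : V) : e '' closedNbhd G v = closedNbhd G' (e v) := by
  ext w
  constructor
  · rintro ⟨u, rfl | hu, rfl⟩
    exacts [Or.inl rfl, Or.inr (e.map_adj_iff.mpr hu)]
  · rintro (rfl | hw)
    · exact ⟨v, Or.inl rfl, rfl⟩
    · refine ⟨e.symm w, Or.inr ?_, e.apply_symm_apply w⟩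
      simpa only [RelIso.symm_apply_apply] using e.symm.map_adj_iff.mpr hw

section Strip

variable {k : ℕ}

def bar (k : ℕ) (j l : ℤ) : Set (ℤ × Fin k) := {p | j ≤ p.1 ∧ p.1 < j + l}

@[simps]
def stripTranslate (k : ℕ) (c : ℤ) : strip k ≃g strip k where
  toFun p := (p.1 + c, p.2)
  invFun p := (p.1 - c, p.2)
  left_inv p := by simp
  right_inv p := by simp
  map_rel_iff' := by simp [strip]

@[simps]
def stripReflect (k : ℕ) (c : ℤ) : strip k ≃g strip k where
  toFun p := (c - p.1, p.2)
  invFun p := (c - p.1, p.2)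
  left_inv p := by simp
  right_inv p := by simp
  map_rel_iff' := by simp only [strip, Equiv.coe_fn_mk, sub_sub_sub_cancel_left]; omega

theorem mem_image_stripTranslate {c : ℤ} {S : Set (ℤ × Fin k)} {p : ℤ × Fin k} :
    p ∈ stripTranslate k c '' S ↔ (p.1 - c, p.2) ∈ S := by
  rw [RelIso.image_eq_preimage_symm]; rfl

theorem mem_image_stripReflect {c : ℤ} {S : Set (ℤ × Fin k)} {p : ℤ × Fin k} :
    p ∈ stripReflect k c '' S ↔ (c - p.1, p.2) ∈ S := by
  rw [RelIso.image_eq_preimage_symm]; rfl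

theorem image_stripReflect_image_stripReflect (c : ℤ) (S : Set (ℤ × Fin k)) :
    stripReflect k c '' (stripReflect k c '' S) = S := by
  ext p
  simp only [mem_image_stripReflect, sub_sub_cancel]

theorem mem_closedNbhd_strip {v w : ℤ × Fin k} :
    w ∈ closedNbhd (strip k) v ↔ (w.1 - v.1).natAbs + ((w.2 : ℤ) - v.2).natAbs ≤ 1 := by
  simp only [closedNbhd, strip, Set.mem_ofPred_eq, Prod.ext_iff, Fin.ext_iff]
  omega

theorem closedNbhd_strip_injective : Function.Injective (closedNbhd (strip k)) := by
  intro u v huv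
  by_contra hne
  have hu : u ∈ closedNbhd (strip k) v := huv ▸ Or.inl rfl
  rw [mem_closedNbhd_strip] at hu
  suffices ∃ w ∈ closedNbhd (strip k) u, w ∉ closedNbhd (strip k) v from
    let ⟨w, hwu, hwv⟩ := this; hwv (huv ▸ hwu)
  simp only [mem_closedNbhd_strip]
  -- the neighbour of `u` on the side away from `v`
  by_cases hcol : u.1 = v.1
  · have hrow : (u.2 : ℤ) ≠ v.2 := fun h => hne (Prod.ext hcol (Fin.ext (by omega)))
    exact ⟨(u.1 + 1, u.2), by dsimp only; omega, by dsimp only; omega⟩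
  · exact ⟨(2 * u.1 - v.1, u.2), by dsimp only; omega, by dsimp only; omega⟩

theorem closedNbhd_strip_subset_bar {j l : ℤ} {v : ℤ × Fin k} (hv : j + 1 ≤ v.1)
    (hv' : v.1 < j + l - 1) : closedNbhd (strip k) v ⊆ bar k j l := fun w hw => by
  rw [mem_closedNbhd_strip] at hw
  simp only [bar, Set.mem_ofPred_eq]
  omega

theorem IsBarcode.image {j j' l : ℤ} {P : Set (ℤ × Fin k)} (e : strip k ≃g strip k)
    (hbar : ∀ p, j ≤ p.1 ∧ p.1 < j + l ↔ j' ≤ (e p).1 ∧ (e p).1 < j' + l)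
    (hmid : ∀ p, j + 1 ≤ p.1 ∧ p.1 < j + l - 1 ↔
      j' + 1 ≤ (e p).1 ∧ (e p).1 < j' + l - 1)
    (hP : IsBarcode k j l P) : IsBarcode k j' l (e '' P) := by
  obtain ⟨hsub, hdom, hsep⟩ := hP
  have hN (v) : closedNbhd (strip k) (e v) ∩ e '' P = e '' (closedNbhd (strip k) v ∩ P) := by
    rw [Set.image_inter e.injective, image_closedNbhd]
  refine ⟨?_, ?_, ?_⟩
  · rintro _ ⟨p, hp, rfl⟩
    exact (hbar p).mp (hsub p hp)
  · intro v' h1 h2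
    obtain ⟨v, rfl⟩ := e.surjective v'
    rw [hN]
    exact (hdom v ((hmid v).mpr ⟨h1, h2⟩).1 ((hmid v).mpr ⟨h1, h2⟩).2).image e
  · intro u' v' hu1 hu2 hv1 hv2 hne
    obtain ⟨u, rfl⟩ := e.surjective u'
    obtain ⟨v, rfl⟩ := e.surjective v'
    rw [hN, hN]
    exact fun h => hsep u v ((hmid u).mpr ⟨hu1, hu2⟩).1 ((hmid u).mpr ⟨hu1, hu2⟩).2
      ((hmid v).mpr ⟨hv1, hv2⟩).1 ((hmid v).mpr ⟨hv1, hv2⟩).2 (fun huv => hne (huv ▸ rfl))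
      (Set.image_injective.mpr e.injective h)

theorem IsBarcode.translate {j l : ℤ} {P : Set (ℤ × Fin k)} (c : ℤ)
    (hP : IsBarcode k j l P) :
    IsBarcode k (j + c) l (stripTranslate k c '' P) :=
  hP.image _ (fun _ => by simp only [stripTranslate_apply]; omega)
    (fun _ => by simp only [stripTranslate_apply]; omega)

theorem IsBarcode.reflect {j l : ℤ} {P : Set (ℤ × Fin k)} (c : ℤ) (hP : IsBarcode k j l P) :
    IsBarcode k (c - (j + l - 1)) l (stripReflect k c '' P) :=
  hP.image _ (fun _ => by simp only [stripReflect_apply]; omega)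
    (fun _ => by simp only [stripReflect_apply]; omega)

theorem isBarcode_bar (j l : ℤ) : IsBarcode k j l (bar k j l) := by
  refine ⟨fun p hp => hp, fun v h1 h2 => ?_, fun u v hu1 hu2 hv1 hv2 hne => ?_⟩
  · rw [Set.inter_eq_left.mpr (closedNbhd_strip_subset_bar h1 h2)]
    exact ⟨v, Or.inl rfl⟩
  · rw [Set.inter_eq_left.mpr (closedNbhd_strip_subset_bar hu1 hu2),
      Set.inter_eq_left.mpr (closedNbhd_strip_subset_bar hv1 hv2)]
    exact hne ∘ (closedNbhd_strip_injective ·)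

theorem IsBarcode.inter_bar {j l j' l' : ℤ} {Q : Set (ℤ × Fin k)} (hQ : IsBarcode k j l Q)
    (hj : j ≤ j') (hl : j' + l' ≤ j + l) : IsBarcode k j' l' (Q ∩ bar k j' l') := by
  obtain ⟨hsub, hdom, hsep⟩ := hQ
  have hN (v : ℤ × Fin k) (h1 : j' + 1 ≤ v.1) (h2 : v.1 < j' + l' - 1) :
      closedNbhd (strip k) v ∩ (Q ∩ bar k j' l') = closedNbhd (strip k) v ∩ Q := by
    rw [Set.inter_comm Q, ← Set.inter_assoc,
      Set.inter_eq_left.mpr (closedNbhd_strip_subset_bar h1 h2)]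
  refine ⟨fun p hp => hp.2, fun v h1 h2 => ?_, fun u v hu1 hu2 hv1 hv2 hne => ?_⟩
  · rw [hN v h1 h2]
    exact hdom v (by omega) (by omega)
  · rw [hN u hu1 hu2, hN v hv1 hv2]
    exact hsep u v (by omega) (by omega) (by omega) (by omega) hne

theorem IsBarcode.union_column {j l : ℤ} {P : Set (ℤ × Fin k)} (hP : IsBarcode k j l P)
    (hl : 0 ≤ l) : IsBarcode k j (l + 1) (P ∪ {p | p.1 = j + l}) := by
  obtain ⟨hsub, hdom, hsep⟩ := hP
  have hold (u : ℤ × Fin k) (hu : u.1 < j + l - 1) :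
      closedNbhd (strip k) u ∩ (P ∪ {p | p.1 = j + l}) = closedNbhd (strip k) u ∩ P := by
    rw [Set.inter_union_distrib_left, Set.union_eq_left]
    rintro w ⟨hw, hwC⟩
    rw [mem_closedNbhd_strip] at hw
    simp only [Set.mem_ofPred_eq] at hwC
    omega
  have hright (v : ℤ × Fin k) (hv : v.1 = j + l - 1) :
      (j + l, v.2) ∈ closedNbhd (strip k) v := by
    simp only [mem_closedNbhd_strip, sub_self, Int.natAbs_zero, add_zero]
    omega
  have hlast (u v : ℤ × Fin k) (hu : u.1 = j + l - 1) (hv : v.1 < j + l)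
      (heq : closedNbhd (strip k) u ∩ (P ∪ {p | p.1 = j + l}) =
        closedNbhd (strip k) v ∩ (P ∪ {p | p.1 = j + l})) : u = v := by
    have hw := (heq ▸ ⟨hright u hu, Or.inr rfl⟩ :
      (j + l, u.2) ∈ closedNbhd (strip k) v ∩ (P ∪ {p | p.1 = j + l})).1
    rw [mem_closedNbhd_strip] at hw
    dsimp only at hw
    exact Prod.ext (by omega) (Fin.ext (by omega))
  refine ⟨?_, fun v h1 h2 => ?_, fun u v hu1 hu2 hv1 hv2 hne heq => ?_⟩
  · rintro p (hp | hp)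
    · have := hsub p hp; omega
    · simp only [Set.mem_ofPred_eq] at hp; omega
  · by_cases hv : v.1 = j + l - 1
    · exact ⟨_, hright v hv, Or.inr rfl⟩
    · rw [hold v (by omega)]
      exact hdom v h1 (by omega)
  · by_cases hu : u.1 = j + l - 1
    · exact hne (hlast u v hu (by omega) heq)
    by_cases hv : v.1 = j + l - 1
    · exact hne (hlast v u hv (by omega) heq.symm).symm
    rw [hold u (by omega), hold v (by omega)] at heq
    exact hsep u v hu1 (by omega) hv1 (by omega) hne heq

end Strip

section Hk

variable {k : ℕ} {P Q : Set (ℤ × Fin k)}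

theorem isBarcode_fullBar : IsBarcode k 0 4 (fullBar k) := by
  convert isBarcode_bar 0 4 using 1
  ext p
  simp only [fullBar, bar, Set.mem_ofPred_eq]
  omega

theorem IsBarcode.union_column_four (hP : IsBarcode k 0 4 P) :
    IsBarcode k 0 5 (P ∪ {p | p.1 = 4}) := by
  simpa using hP.union_column (by norm_num)

theorem IsBarcode.lastFour (hQ : IsBarcode k 0 5 Q) :
    IsBarcode k 0 4 {p | 0 ≤ p.1 ∧ (p.1 + 1, p.2) ∈ Q} := by
  convert (hQ.inter_bar (j' := 1) (l' := 4) (by norm_num) (by norm_num)).translate (-1) using 1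
  · norm_num
  ext p
  have := hQ.1 (p.1 + 1, p.2)
  simp only [mem_image_stripTranslate, bar, Set.mem_inter_iff, Set.mem_ofPred_eq, sub_neg_eq_add]
  constructor
  · rintro ⟨h0, hp⟩
    exact ⟨hp, by omega, (this hp).2.trans_eq (by ring)⟩
  · rintro ⟨hp, h1, -⟩
    exact ⟨by omega, hp⟩

def fullColumnStep (k : ℕ) (P : Set (ℤ × Fin k)) : Set (ℤ × Fin k) :=
  {p | 0 ≤ p.1 ∧ (p.1 + 1, p.2) ∈ P ∪ {p | p.1 = 4}}

theorem IsBarcode.fullColumnStep (hP : IsBarcode k 0 4 P) :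
    IsBarcode k 0 4 (fullColumnStep k P) :=
  hP.union_column_four.lastFour

theorem hkAdj_fullColumnStep (hP : IsBarcode k 0 4 P) : HkAdj k P (fullColumnStep k P) := by
  refine ⟨_, hP.union_column_four, ?_, rfl⟩
  ext p
  simp only [Set.mem_union, Set.mem_ofPred_eq]
  constructor
  · intro hp
    have := hP.1 p hp
    exact ⟨Or.inl hp, by omega⟩
  · rintro ⟨hp | hp, h3⟩
    exacts [hp, by omega]

theorem fullColumnStep_iterate_four (hP : IsBarcode k 0 4 P) :
    (fullColumnStep k)^[4] P = fullBar k := by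
  ext ⟨x, y⟩
  simp only [Function.iterate_succ, Function.iterate_zero, id_eq, Function.comp_apply,
    fullColumnStep, fullBar, Set.mem_union, Set.mem_ofPred_eq]
  by_cases hm : (x + 1 + 1 + 1 + 1, y) ∈ P
  · have := hP.1 _ hm
    dsimp only at this
    omega
  · simp only [hm, false_or]
    omega

theorem fullColumnStep_fullBar : fullColumnStep k (fullBar k) = fullBar k := by
  ext p
  simp only [fullColumnStep, fullBar, Set.mem_union, Set.mem_ofPred_eq]
  omega

theorem image_stripReflect_fullBar : stripReflect k 3 '' fullBar k = fullBar k := by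
  ext p
  simp only [mem_image_stripReflect, fullBar, Set.mem_ofPred_eq]
  omega

theorem hkAdj_reflect {P P' : Set (ℤ × Fin k)} (h : HkAdj k P P') :
    HkAdj k (stripReflect k 3 '' P') (stripReflect k 3 '' P) := by
  obtain ⟨Q, hQ, rfl, rfl⟩ := h
  refine ⟨stripReflect k 4 '' Q, by simpa using hQ.reflect 4, ?_, ?_⟩
  · ext ⟨x, y⟩
    simp only [mem_image_stripReflect, Set.mem_ofPred_eq, show (3 : ℤ) - x + 1 = 4 - x by ring]
    constructor
    · rintro ⟨hx, hq⟩; exact ⟨hq, by omega⟩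
    · rintro ⟨hq, hx⟩; exact ⟨by omega, hq⟩
  · ext ⟨x, y⟩
    simp only [mem_image_stripReflect, Set.mem_ofPred_eq, show (4 : ℤ) - (x + 1) = 3 - x by ring]
    constructor
    · rintro ⟨hq, hx⟩; exact ⟨by omega, hq⟩
    · rintro ⟨hx, hq⟩; exact ⟨hq, by omega⟩

end Hk

theorem Relation.reflTransGen_of_chain {α : Type*} {r : α → α → Prop} {c : ℕ → α} :
    ∀ m : ℕ, (∀ i < m, r (c i) (c (i + 1))) → Relation.ReflTransGen r (c 0) (c m)
  | 0, _ => .refl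
  | m + 1, h => (reflTransGen_of_chain m fun i hi => h i (by omega)).tail (h m (by omega))

section HkPaths

variable {k : ℕ} {P : Set (ℤ × Fin k)}

theorem exists_hkPath_to_fullBar (hP : IsBarcode k 0 4 P) :
    ∃ (m : ℕ) (c : ℕ → Set (ℤ × Fin k)), m ≤ 4 ∧ c 0 = P ∧
      c m = fullBar k ∧ ∀ i < m, HkAdj k (c i) (c (i + 1)) := by
  refine ⟨4, fun i => (fullColumnStep k)^[i] P, le_rfl, rfl, fullColumnStep_iterate_four hP,
    fun i _ => ?_⟩
  dsimp only
  rw [Function.iterate_succ_apply']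
  exact hkAdj_fullColumnStep (Function.Iterate.rec _ hP (fun _ => IsBarcode.fullColumnStep) i)

theorem reflTransGen_hkAdj_to_fullBar (hP : IsBarcode k 0 4 P) :
    Relation.ReflTransGen (HkAdj k) P (fullBar k) := by
  obtain ⟨m, c, -, rfl, hm, hc⟩ := exists_hkPath_to_fullBar hP
  exact hm ▸ Relation.reflTransGen_of_chain m hc

theorem reflTransGen_hkAdj_from_fullBar (hP : IsBarcode k 0 4 P) :
    Relation.ReflTransGen (HkAdj k) (fullBar k) P := by
  have hρ : IsBarcode k 0 4 (stripReflect k 3 '' P) := by simpa using hP.reflect 3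
  have h := Relation.reflTransGen_swap.mp <|
    Relation.ReflTransGen.lift (p := Function.swap (HkAdj k)) (stripReflect k 3 '' ·)
      (fun _ _ => hkAdj_reflect) _ _ (reflTransGen_hkAdj_to_fullBar hρ)
  dsimp only at h
  rwa [image_stripReflect_fullBar, image_stripReflect_image_stripReflect] at h

end HkPaths

theorem Hk_strongly_connected_general (k : ℕ) :
    (∀ P : Set (ℤ × Fin k), IsBarcode k 0 4 P →
      IsBarcode k 0 5 (P ∪ {p : ℤ × Fin k | p.1 = 4})) ∧
    HkAdj k (fullBar k) (fullBar k) ∧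
    (∀ P : Set (ℤ × Fin k), IsBarcode k 0 4 P →
      ∃ (m : ℕ) (c : ℕ → Set (ℤ × Fin k)), m ≤ 4 ∧ c 0 = P ∧
        c m = fullBar k ∧ ∀ i < m, HkAdj k (c i) (c (i + 1))) ∧
    (∀ P P' : Set (ℤ × Fin k), IsBarcode k 0 4 P → IsBarcode k 0 4 P' →
      Relation.ReflTransGen (HkAdj k) P P') :=
  ⟨fun _ hP => hP.union_column_four,
    by simpa only [fullColumnStep_fullBar] using hkAdj_fullColumnStep isBarcode_fullBar,
    fun _ hP => exists_hkPath_to_fullBar hP,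
    fun _ _ hP hP' =>
      (reflTransGen_hkAdj_to_fullBar hP).trans (reflTransGen_hkAdj_from_fullBar hP')⟩

/-- In H_k: extending any barcode of a 4-bar by a full column yields a barcode
of a 5-bar; the full 4-bar barcode s has a self-loop; every barcode has a
directed path of at most 4 edges to s; and H_k is strongly connected. -/
theorem Hk_strongly_connected (k : ℕ) (hk : 0 < k) :
    (∀ P : Set (ℤ × Fin k), IsBarcode k 0 4 P →
      IsBarcode k 0 5 (P ∪ {p : ℤ × Fin k | p.1 = 4})) ∧
    HkAdj k (fullBar k) (fullBar k) ∧
    (∀ P : Set (ℤ × Fin k), IsBarcode k 0 4 P →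
      ∃ (m : ℕ) (c : ℕ → Set (ℤ × Fin k)), m ≤ 4 ∧ c 0 = P ∧
        c m = fullBar k ∧ ∀ i < m, HkAdj k (c i) (c (i + 1))) ∧
    (∀ P P' : Set (ℤ × Fin k), IsBarcode k 0 4 P → IsBarcode k 0 4 P' →
      Relation.ReflTransGen (HkAdj k) P P') :=
  Hk_strongly_connected_general k
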